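/- arXiv:1209.0933 — 2 statements merged into one kernel-verified Lean document; each statement's English description precedes it below -/
import Mathlib

section
/- Let O be the ring of integers of a number field, q a prime element of O, and n ≥ 2. Suppose D ∈ O is exactly divisible by q^{2n} (q^{2n} | D but q^{2n+1} ∤ D). Let r < s be positive integers and consider h(t) = Σ_{i=1}^{n} (q^n t^r)^i (q t^s)^{n−i} − D ∈ O[t]. Then every coefficient of h is divisible by q^{2n−1}, and h(t)/q^{2n−1} is, up to reversing, Eisenstein at q; in particular h is irreducible over the fraction field of O. -/
open Polynomial NumberField

private lemma exp_id (n i : ℕ) (h1 : 1 ≤ i) (h2 : i ≤ n) :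
    n * i + (n - i) = 2 * n - 1 + (n - 1) * (i - 1) := by
  obtain ⟨i', rfl⟩ := Nat.exists_eq_add_of_le h1
  obtain ⟨k, rfl⟩ := Nat.exists_eq_add_of_le h2
  have e1 : 1 + i' + k - (1 + i') = k := by omega
  have e2 : 1 + i' - 1 = i' := by omega
  have e3 : 1 + i' + k - 1 = i' + k := by omega
  have e4 : 2 * (1 + i' + k) - 1 = 1 + 2 * i' + 2 * k := by omega
  rw [e1, e2, e3, e4]
  ring

private lemma exp_lt (r s n i : ℕ) (hrs : r < s) (h2 : 2 ≤ i) (hin : i ≤ n) :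
    r * i + s * (n - i) < r + s * (n - 1) := by
  obtain ⟨i', rfl⟩ := Nat.exists_eq_add_of_le h2
  obtain ⟨k, rfl⟩ := Nat.exists_eq_add_of_le hin
  have e1 : 2 + i' + k - (2 + i') = k := by omega
  have e2 : 2 + i' + k - 1 = 1 + i' + k := by omega
  rw [e1, e2]
  nlinarith [Nat.mul_lt_mul_of_lt_of_le hrs (le_refl (1 + i')) (by omega : 0 < 1 + i')]

theorem stmt_12 (K : Type) [Field K] [NumberField K]
    (q : 𝓞 K) (hq : Prime q) (n : ℕ) (hn : 2 ≤ n)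
    (D : 𝓞 K) (hD : q ^ (2 * n) ∣ D) (hD' : ¬ q ^ (2 * n + 1) ∣ D)
    (r s : ℕ) (hr : 0 < r) (hrs : r < s) :
    let h : Polynomial (𝓞 K) :=
      (∑ i ∈ Finset.Icc 1 n, (C (q ^ n) * X ^ r) ^ i * (C q * X ^ s) ^ (n - i)) - C D
    (∀ j, q ^ (2 * n - 1) ∣ h.coeff j) ∧
      Irreducible (h.map (algebraMap (𝓞 K) K)) := by
  intro h
  obtain ⟨d, hd⟩ := hD
  set T : ℕ := r + s * (n - 1) with hT
  have hT0 : 0 < T := by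
    have : 0 < r := hr
    omega
  set g₂ : Polynomial (𝓞 K) :=
    (∑ i ∈ Finset.Icc 2 n, C (q ^ ((n - 1) * (i - 1))) * X ^ (r * i + s * (n - i))) -
      C (q * d) with hg₂
  set g : Polynomial (𝓞 K) := X ^ T + g₂ with hg
  -- factorization h = C (q ^ (2n-1)) * g
  have hfac : h = C (q ^ (2 * n - 1)) * g := by
    have step : ∀ i ∈ Finset.Icc 1 n,
        (C (q ^ n) * X ^ r) ^ i * (C q * X ^ s) ^ (n - i) =
          C (q ^ (2 * n - 1)) * (C (q ^ ((n - 1) * (i - 1))) * X ^ (r * i + s * (n - i))) := by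
      intro i hi
      simp only [Finset.mem_Icc] at hi
      rw [mul_pow, mul_pow, ← C_pow, ← C_pow, ← pow_mul, ← pow_mul, ← pow_mul]
      have key : (q ^ (n * i)) * (q ^ (n - i)) =
          q ^ (2 * n - 1) * q ^ ((n - 1) * (i - 1)) := by
        rw [← pow_add, ← pow_add, exp_id n i hi.1 hi.2]
      calc C (q ^ (n * i)) * X ^ (r * i) * (C (q ^ (n - i)) * X ^ (s * (n - i)))
          = C ((q ^ (n * i)) * (q ^ (n - i))) * X ^ (r * i + s * (n - i)) := by
            rw [C_mul, pow_add]; ring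
        _ = C (q ^ (2 * n - 1)) * (C (q ^ ((n - 1) * (i - 1))) * X ^ (r * i + s * (n - i))) := by
            rw [key, C_mul]; ring
    have hsum : (∑ i ∈ Finset.Icc 1 n, (C (q ^ n) * X ^ r) ^ i * (C q * X ^ s) ^ (n - i)) =
        C (q ^ (2 * n - 1)) *
          ∑ i ∈ Finset.Icc 1 n, C (q ^ ((n - 1) * (i - 1))) * X ^ (r * i + s * (n - i)) := by
      rw [Finset.sum_congr rfl step, Finset.mul_sum]
    have h1mem : 1 ∈ Finset.Icc 1 n := by simp; omega
    have hsplit : (∑ i ∈ Finset.Icc 1 n,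
        C (q ^ ((n - 1) * (i - 1))) * X ^ (r * i + s * (n - i))) =
        X ^ T + ∑ i ∈ Finset.Icc 2 n, C (q ^ ((n - 1) * (i - 1))) * X ^ (r * i + s * (n - i)) := by
      rw [← Finset.add_sum_erase _ _ h1mem]
      congr 1
      · simp [hT]
      · congr 1
        rw [Finset.Icc_erase_left]
        exact (Finset.Icc_add_one_left_eq_Ioc 1 n).symm
    have hDval : C D = C (q ^ (2 * n - 1)) * C (q * d) := by
      rw [← C_mul, hd]
      congr 1
      rw [← mul_assoc, ← pow_succ]
      congr 2
      omega
    show (∑ i ∈ Finset.Icc 1 n, (C (q ^ n) * X ^ r) ^ i * (C q * X ^ s) ^ (n - i)) - C D = _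
    rw [hsum, hsplit, hDval, hg, hg₂]
    ring
  have hqne : q ≠ 0 := hq.ne_zero
  -- degree of g₂ is < T
  have hdeg₂ : g₂.degree < (T : WithBot ℕ) := by
    rw [hg₂]
    apply lt_of_le_of_lt (degree_sub_le _ _)
    rw [max_lt_iff]
    constructor
    · apply lt_of_le_of_lt (degree_sum_le _ _)
      rw [Finset.sup_lt_iff (by exact_mod_cast WithBot.bot_lt_coe T)]
      intro i hi
      simp only [Finset.mem_Icc] at hi
      apply lt_of_le_of_lt (degree_C_mul_X_pow_le _ _)
      exact_mod_cast exp_lt r s n i hrs hi.1 hi.2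
    · apply lt_of_le_of_lt (degree_C_le)
      exact_mod_cast hT0
  have hdegX : (X ^ T : Polynomial (𝓞 K)).degree = (T : WithBot ℕ) := degree_X_pow T
  have hgdeg : g.degree = (T : WithBot ℕ) := by
    rw [hg, degree_add_eq_left_of_degree_lt (by rwa [hdegX]), hdegX]
  have hgnatdeg : g.natDegree = T := natDegree_eq_of_degree_eq_some hgdeg
  have hmonic : g.Monic := by
    unfold Polynomial.Monic Polynomial.leadingCoeff
    rw [hgnatdeg, hg, coeff_add, coeff_X_pow, if_pos rfl,
      coeff_eq_zero_of_degree_lt hdeg₂, add_zero]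
  -- coefficient at 0
  have hcoeff0 : g.coeff 0 = -(q * d) := by
    rw [hg, coeff_add, coeff_X_pow, if_neg (by omega), hg₂, coeff_sub, finset_sum_coeff]
    rw [Finset.sum_eq_zero, coeff_C, if_pos rfl, zero_add, zero_sub]
    intro i hi
    simp only [Finset.mem_Icc] at hi
    rw [coeff_C_mul, coeff_X_pow, if_neg (by nlinarith [hi.1, hr]), mul_zero]
  -- Eisenstein
  set P : Ideal (𝓞 K) := Ideal.span {q} with hP
  have hPprime : P.IsPrime := (Ideal.span_singleton_prime hqne).mpr hq
  have hEis : g.IsEisensteinAt P := by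
    constructor
    · rw [Polynomial.Monic.leadingCoeff hmonic, hP, Ideal.mem_span_singleton]
      intro hdvd
      exact hq.not_unit (isUnit_of_dvd_one hdvd)
    · intro j hj
      rw [hgnatdeg] at hj
      rw [hP, Ideal.mem_span_singleton, hg, coeff_add, coeff_X_pow,
        if_neg (by omega), zero_add, hg₂, coeff_sub, finset_sum_coeff]
      apply dvd_sub
      · apply Finset.dvd_sum
        intro i hi
        simp only [Finset.mem_Icc] at hi
        rw [coeff_C_mul]
        apply dvd_mul_of_dvd_left
        apply dvd_pow_self q
        have : 1 ≤ n - 1 := by omega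
        have : 1 ≤ i - 1 := by omega
        positivity
      · rw [coeff_C]
        split
        · exact Dvd.intro d rfl
        · exact dvd_zero q
    · rw [hP, Ideal.span_singleton_pow, Ideal.mem_span_singleton, hcoeff0, dvd_neg]
      intro hdvd
      have hqd : q ∣ d := by
        rw [pow_two] at hdvd
        exact (mul_dvd_mul_iff_left hqne).mp hdvd
      apply hD'
      obtain ⟨e, he⟩ := hqd
      exact ⟨e, by rw [hd, he, pow_succ]; ring⟩
  have hgirr : Irreducible g :=
    hEis.irreducible hPprime hmonic.isPrimitive (by omega)
  have hgmapirr : Irreducible (g.map (algebraMap (𝓞 K) K)) :=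
    (hmonic.irreducible_iff_irreducible_map_fraction_map).mp hgirr
  constructor
  · intro j
    rw [hfac, coeff_C_mul]
    exact Dvd.intro _ rfl
  · rw [hfac, Polynomial.map_mul, map_C]
    rw [irreducible_isUnit_mul]
    · exact hgmapirr
    · rw [isUnit_C]
      apply IsUnit.mk0
      simp only [ne_eq, map_eq_zero_iff _ (NumberField.RingOfIntegers.coe_injective)]
      exact pow_ne_zero _ hqne
end

section
/- Let q be a prime element of the ring of integers O_K of a number field K, let k, d ≥ 1 with gcd(d,k) = 1, choose positive integers a, b with bk − ad = 1, and let f, g ∈ O_K[x] be monic of degrees k, d with all non-leading coefficients divisible by q^{da+1}. Let m, n be positive integers and set h(0,t) = g(q^a t^m)·t^{kn} − Σ_{i=0}^{k} (f^{(i)}(0)/i!)·q^{ib}·t^{n(k−i)} ∈ O_K[t]. Then q^{da} divides every coefficient of h(0,t), and h(0,t)/q^{da} is a polynomial with constant term a unit times q, leading coefficient a unit, and all middle coefficients divisible by q; hence h(0,t) is irreducible over K (after reversing coefficients it is Eisenstein at q). -/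
/-!
Apart from the leading term `q^(da) t^(md+kn)` (from the leading coefficient of `g`) and the
constant term `-q^(kb) = -q^(da+1)` (from that of `f`, using `bk = ad + 1`), every term of `h0`
has a coefficient divisible by `q^(da+1)` and an exponent strictly between `0` and `md + kn`.
Dividing by `q^(da)` leaves `t^(md+kn) + q B(t)` with `B(0) = -1`, which is Eisenstein at `q`;
Gauss's lemma over the integrally closed ring `𝓞 K` carries irreducibility over to `K`.
-/

open Polynomial NumberField

namespace Polynomial

variable {R : Type*} [CommRing R]

theorem comp_C_mul_X_pow_eq_sum (p : R[X]) (c : R) (m : ℕ) :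
    p.comp (C c * X ^ m) =
      ∑ j ∈ Finset.range (p.natDegree + 1), C (p.coeff j * c ^ j) * X ^ (m * j) := by
  rw [comp, eval₂_eq_sum_range]
  refine Finset.sum_congr rfl fun j _ => ?_
  rw [mul_pow, ← C_pow, ← pow_mul, C_mul]
  ring

theorem C_mul_X_dvd_sum_C_mul_X_pow {ι : Type*} {s : Finset ι} {c : ι → R} {e : ι → ℕ}
    {r : R} (hc : ∀ i ∈ s, r ∣ c i) (he : ∀ i ∈ s, 0 < e i) :
    C r * X ∣ ∑ i ∈ s, C (c i) * X ^ e i :=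
  Finset.dvd_sum fun i hi =>
    mul_dvd_mul (_root_.map_dvd C (hc i hi)) (dvd_pow_self X (he i hi).ne')

theorem degree_sum_C_mul_X_pow_lt {ι : Type*} {s : Finset ι} {c : ι → R} {e : ι → ℕ}
    {N : ℕ} (he : ∀ i ∈ s, e i < N) :
    (∑ i ∈ s, C (c i) * X ^ e i).degree < (N : WithBot ℕ) :=
  (degree_sum_le _ _).trans_lt <| (Finset.sup_lt_iff (WithBot.bot_lt_coe N)).2 fun i hi =>
    (degree_C_mul_X_pow_le _ _).trans_lt (WithBot.coe_lt_coe.2 (he i hi))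

theorem natDegree_X_pow_add_of_degree_lt [Nontrivial R] {p : R[X]} {N : ℕ}
    (hp : p.degree < N) : (X ^ N + p).natDegree = N := by
  rw [natDegree_add_eq_left_of_degree_lt (by rwa [degree_X_pow]), natDegree_X_pow]

section IsDomain

variable [IsDomain R]

theorem isEisensteinAt_X_pow_add_C_mul {q : R} (hq : Prime q) {N : ℕ} (hN : 0 < N) {B : R[X]}
    (hB : B.degree < N) (hB0 : IsUnit (B.coeff 0)) :
    (X ^ N + C q * B).IsEisensteinAt (Ideal.span {q}) := by
  have hqB : (C q * B).degree < N := by rwa [degree_C_mul hq.ne_zero]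
  refine ⟨?_, fun {j} hj => ?_, ?_⟩
  · rw [(monic_X_pow_add hqB).leadingCoeff, Ideal.mem_span_singleton]
    exact hq.not_dvd_one
  · rw [natDegree_X_pow_add_of_degree_lt hqB] at hj
    rw [coeff_add, coeff_X_pow, if_neg hj.ne, zero_add, coeff_C_mul]
    exact Ideal.mem_span_singleton.2 (dvd_mul_right q _)
  · rw [coeff_add, coeff_X_pow, if_neg hN.ne, zero_add, coeff_C_mul, Ideal.span_singleton_pow,
      Ideal.mem_span_singleton, sq, mul_dvd_mul_iff_left hq.ne_zero]
    exact fun h => hq.not_isUnit (isUnit_of_dvd_unit h hB0)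

theorem exists_eq_C_mul_X_pow_add_C_mul {r q : R} (hrq : r * q ≠ 0) {N : ℕ} (hN : 0 < N)
    {S : R[X]} (hS : C (r * q) * X ∣ S) (hSdeg : S.degree < N) :
    ∃ B : R[X], C r * X ^ N - C (r * q) + S = C r * (X ^ N + C q * B) ∧
      B.degree < N ∧ B.coeff 0 = -1 := by
  obtain ⟨A, rfl⟩ := hS
  refine ⟨X * A - 1, by rw [C_mul]; ring, ?_, by simp⟩
  rw [mul_assoc, degree_C_mul hrq] at hSdeg
  exact (degree_sub_le _ _).trans_lt (max_lt hSdeg (degree_one_le.trans_lt (by exact_mod_cast hN)))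

theorem irreducible_map_C_mul_of_isEisensteinAt [IsIntegrallyClosed R] {K : Type*} [Field K]
    [Algebra R K] [IsFractionRing R K] {P : Ideal R} (hP : P.IsPrime) {p : R[X]}
    (hp : p.IsEisensteinAt P) (hmon : p.Monic) (hdeg : 0 < p.natDegree) {r : R} (hr : r ≠ 0) :
    Irreducible ((C r * p).map (algebraMap R K)) := by
  rw [Polynomial.map_mul, map_C, irreducible_isUnit_mul (isUnit_C.2 (isUnit_iff_ne_zero.2
    ((map_ne_zero_iff _ (IsFractionRing.injective R K)).2 hr)))]
  exact hmon.irreducible_iff_irreducible_map_fraction_map.1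
    (hp.irreducible hP hmon.isPrimitive hdeg)

end IsDomain

section CoveringPolynomial

variable {q : R} {k d a b : ℕ} {f g : R[X]}

theorem comp_mul_X_pow_sub_sum_eq (hBez : b * k = a * d + 1) (hfm : f.Monic) (hgm : g.Monic)
    (hfdeg : f.natDegree = k) (hgdeg : g.natDegree = d) (m n : ℕ) :
    g.comp (C (q ^ a) * X ^ m) * X ^ (k * n) -
        ∑ i ∈ Finset.range (k + 1), C (f.coeff i * q ^ (i * b)) * X ^ (n * (k - i)) =
      C (q ^ (d * a)) * X ^ (m * d + k * n) - C (q ^ (d * a) * q) +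
        (∑ j ∈ Finset.range d, C (g.coeff j * q ^ (a * j)) * X ^ (m * j + k * n) -
          ∑ i ∈ Finset.range k, C (f.coeff i * q ^ (i * b)) * X ^ (n * (k - i))) := by
  have hgd : g.coeff d = 1 := hgdeg ▸ hgm.coeff_natDegree
  have hfk : f.coeff k = 1 := hfdeg ▸ hfm.coeff_natDegree
  have hlower :
      (∑ j ∈ Finset.range d, C (g.coeff j * (q ^ a) ^ j) * X ^ (m * j)) * X ^ (k * n) =
        ∑ j ∈ Finset.range d, C (g.coeff j * q ^ (a * j)) * X ^ (m * j + k * n) := by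
    rw [Finset.sum_mul]
    exact Finset.sum_congr rfl fun j _ => by rw [← pow_mul, pow_add, mul_assoc]
  rw [comp_C_mul_X_pow_eq_sum, hgdeg, Finset.sum_range_succ, Finset.sum_range_succ, add_mul,
    hlower, hgd, hfk, one_mul, one_mul, ← pow_mul, mul_comm a d, mul_assoc, ← pow_add,
    Nat.sub_self, mul_zero, pow_zero, mul_one, mul_comm k b, hBez, mul_comm a d, pow_succ]
  abel

theorem exists_tail_of_comp_mul_X_pow_sub_sum (hk : 1 ≤ k) (hd : 1 ≤ d)
    (hBez : b * k = a * d + 1) (hfm : f.Monic) (hgm : g.Monic) (hfdeg : f.natDegree = k)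
    (hgdeg : g.natDegree = d)
    (hfcoeff : ∀ i < k, q ^ (d * a + 1) ∣ f.coeff i)
    (hgcoeff : ∀ i < d, q ^ (d * a + 1) ∣ g.coeff i) {m n : ℕ} (hm : 0 < m) (hn : 0 < n) :
    ∃ S : R[X], g.comp (C (q ^ a) * X ^ m) * X ^ (k * n) -
        ∑ i ∈ Finset.range (k + 1), C (f.coeff i * q ^ (i * b)) * X ^ (n * (k - i)) =
      C (q ^ (d * a)) * X ^ (m * d + k * n) - C (q ^ (d * a) * q) + S ∧
      C (q ^ (d * a) * q) * X ∣ S ∧ S.degree < (m * d + k * n : ℕ) := by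
  refine ⟨_, comp_mul_X_pow_sub_sum_eq hBez hfm hgm hfdeg hgdeg m n, ?_⟩
  have hkn : 0 < k * n := Nat.mul_pos hk hn
  have hmd : 0 < m * d := Nat.mul_pos hm hd
  rw [pow_succ] at hfcoeff hgcoeff
  constructor
  · refine dvd_sub (C_mul_X_dvd_sum_C_mul_X_pow (fun j hj => ?_) fun j _ => ?_)
      (C_mul_X_dvd_sum_C_mul_X_pow (fun i hi => ?_) fun i hi => ?_)
    · exact (hgcoeff j (Finset.mem_range.1 hj)).mul_right _
    · omega
    · exact (hfcoeff i (Finset.mem_range.1 hi)).mul_right _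
    · exact Nat.mul_pos hn (Nat.sub_pos_of_lt (Finset.mem_range.1 hi))
  · refine (degree_sub_le _ _).trans_lt (max_lt (degree_sum_C_mul_X_pow_lt fun j hj => ?_)
      (degree_sum_C_mul_X_pow_lt fun i _ => ?_))
    · have := Nat.mul_lt_mul_of_pos_left (Finset.mem_range.1 hj) hm
      omega
    · exact (Nat.mul_le_mul_left n (Nat.sub_le k i)).trans_lt (by rw [Nat.mul_comm]; omega)

end CoveringPolynomial

end Polynomial

theorem stmt_18_general (K : Type) [Field K] [NumberField K]
    (q : 𝓞 K) (hq : Prime q)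
    (k d : ℕ) (hk : 1 ≤ k) (hd : 1 ≤ d)
    (a b : ℕ) (hBez : b * k = a * d + 1)
    (f g : Polynomial (𝓞 K)) (hfm : f.Monic) (hgm : g.Monic)
    (hfdeg : f.natDegree = k) (hgdeg : g.natDegree = d)
    (hfcoeff : ∀ i < k, q ^ (d * a + 1) ∣ f.coeff i)
    (hgcoeff : ∀ i < d, q ^ (d * a + 1) ∣ g.coeff i)
    (m n : ℕ) (hm : 0 < m) (hn : 0 < n) :
    let h0 : Polynomial (𝓞 K) :=
      g.comp (C (q ^ a) * X ^ m) * X ^ (k * n) -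
        ∑ i ∈ Finset.range (k + 1), C (f.coeff i * q ^ (i * b)) * X ^ (n * (k - i))
    (∀ j, q ^ (d * a) ∣ h0.coeff j) ∧
      (∃ h1 : Polynomial (𝓞 K),
        h0 = C (q ^ (d * a)) * h1 ∧
        (∃ u : (𝓞 K)ˣ, h1.coeff 0 = u * q) ∧
        IsUnit h1.leadingCoeff ∧
        (∀ j, 0 < j → j < h1.natDegree → q ∣ h1.coeff j)) ∧
      Irreducible (h0.map (algebraMap (𝓞 K) K)) := by
  intro h0
  have hN : 0 < m * d + k * n := by positivity
  obtain ⟨S, hh0, hS, hSdeg⟩ := exists_tail_of_comp_mul_X_pow_sub_sum hk hd hBez hfm hgm hfdeg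
    hgdeg hfcoeff hgcoeff hm hn
  obtain ⟨B, hB, hBdeg, hB0⟩ := exists_eq_C_mul_X_pow_add_C_mul
    (mul_ne_zero (pow_ne_zero _ hq.ne_zero) hq.ne_zero) hN hS hSdeg
  rw [← hh0] at hB
  have hEis := isEisensteinAt_X_pow_add_C_mul hq hN hBdeg (hB0 ▸ isUnit_one.neg)
  have hqB : (C q * B).degree < (m * d + k * n : ℕ) := by rwa [degree_C_mul hq.ne_zero]
  have hmon := monic_X_pow_add hqB
  refine ⟨(C_dvd_iff_dvd_coeff _ _).1 ⟨_, hB⟩,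
    ⟨_, hB, ⟨-1, by simp [hB0, hN.ne]⟩, hmon.leadingCoeff ▸ isUnit_one,
      fun j _ hj => Ideal.mem_span_singleton.1 (hEis.mem hj)⟩, ?_⟩
  rw [show h0 = _ from hB]
  exact irreducible_map_C_mul_of_isEisensteinAt ((Ideal.span_singleton_prime hq.ne_zero).2 hq)
    hEis hmon (by rwa [natDegree_X_pow_add_of_degree_lt hqB]) (pow_ne_zero _ hq.ne_zero)

theorem stmt_18 (K : Type) [Field K] [NumberField K]
    (q : 𝓞 K) (hq : Prime q)
    (k d : ℕ) (hk : 1 ≤ k) (hd : 1 ≤ d) (hcop : Nat.gcd d k = 1)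
    (a b : ℕ) (ha : 0 < a) (hb : 0 < b) (hBez : b * k = a * d + 1)
    (f g : Polynomial (𝓞 K)) (hfm : f.Monic) (hgm : g.Monic)
    (hfdeg : f.natDegree = k) (hgdeg : g.natDegree = d)
    (hfcoeff : ∀ i < k, q ^ (d * a + 1) ∣ f.coeff i)
    (hgcoeff : ∀ i < d, q ^ (d * a + 1) ∣ g.coeff i)
    (m n : ℕ) (hm : 0 < m) (hn : 0 < n) :
    let h0 : Polynomial (𝓞 K) :=
      g.comp (C (q ^ a) * X ^ m) * X ^ (k * n) -
        ∑ i ∈ Finset.range (k + 1), C (f.coeff i * q ^ (i * b)) * X ^ (n * (k - i))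
    (∀ j, q ^ (d * a) ∣ h0.coeff j) ∧
      (∃ h1 : Polynomial (𝓞 K),
        h0 = C (q ^ (d * a)) * h1 ∧
        (∃ u : (𝓞 K)ˣ, h1.coeff 0 = u * q) ∧
        IsUnit h1.leadingCoeff ∧
        (∀ j, 0 < j → j < h1.natDegree → q ∣ h1.coeff j)) ∧
      Irreducible (h0.map (algebraMap (𝓞 K) K)) :=
  stmt_18_general K q hq k d hk hd a b hBez f g hfm hgm hfdeg hgdeg hfcoeff hgcoeff m n hm hn
end
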